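/- arXiv:1303.1331 — 3 statements merged into one kernel-verified Lean document; each statement's English description precedes it below -/
import Mathlib

section
/- In a pivotal G-crossed category with pivotal crossing φ, for any isomorphism ψ : X → φ_α(Y), the two operations of 'barring' and 'dualizing' commute: overline(ψ^-) = (overline(ψ))^- as isomorphisms Y* → φ_{α^{-1}}(X*). -/
set_option linter.unusedSectionVars false

open CategoryTheory MonoidalCategory CategoryTheory.Limits

universe w x v u v₂ u₂ v₃ u₃

namespace SurgeryHQFT

/-- A pivotal category: a monoidal category with a dual object `dual X` for every object `X`,
together with the four (co)evaluation morphisms, satisfying the zig-zag identities, the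
coincidence of left and right duals of morphisms, the coincidence of the left and right
monoidal constraints, and the unit condition. -/
class Pivotal (C : Type u) [Category.{v} C] [MonoidalCategory C] where
  dual : C → C
  ev : ∀ X : C, dual X ⊗ X ⟶ 𝟙_ C
  coev : ∀ X : C, 𝟙_ C ⟶ X ⊗ dual X
  ev' : ∀ X : C, X ⊗ dual X ⟶ 𝟙_ C
  coev' : ∀ X : C, 𝟙_ C ⟶ dual X ⊗ X
  zig₁ : ∀ X : C,
    (λ_ X).inv ≫ (coev X ▷ X) ≫ (α_ X (dual X) X).hom ≫ (X ◁ ev X) ≫ (ρ_ X).hom = 𝟙 X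
  zig₂ : ∀ X : C,
    (ρ_ (dual X)).inv ≫ (dual X ◁ coev X) ≫ (α_ (dual X) X (dual X)).inv
      ≫ (ev X ▷ dual X) ≫ (λ_ (dual X)).hom = 𝟙 (dual X)
  zig₃ : ∀ X : C,
    (ρ_ X).inv ≫ (X ◁ coev' X) ≫ (α_ X (dual X) X).inv ≫ (ev' X ▷ X) ≫ (λ_ X).hom = 𝟙 X
  zig₄ : ∀ X : C,
    (λ_ (dual X)).inv ≫ (coev' X ▷ dual X) ≫ (α_ (dual X) X (dual X)).hom
      ≫ (dual X ◁ ev' X) ≫ (ρ_ (dual X)).hom = 𝟙 (dual X)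
  dual_hom_eq : ∀ {X Y : C} (f : X ⟶ Y),
    (ρ_ (dual Y)).inv ≫ (dual Y ◁ (coev X ≫ (f ▷ dual X)))
      ≫ (α_ (dual Y) Y (dual X)).inv ≫ (ev Y ▷ dual X) ≫ (λ_ (dual X)).hom
    = (λ_ (dual Y)).inv ≫ ((coev' X ≫ (dual X ◁ f)) ▷ dual Y)
      ≫ (α_ (dual X) Y (dual Y)).hom ≫ (dual X ◁ ev' Y) ≫ (ρ_ (dual X)).hom
  constraint_eq : ∀ X Y : C,
    (ρ_ (dual X ⊗ dual Y)).inv ≫ ((dual X ⊗ dual Y) ◁ coev (Y ⊗ X))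
      ≫ (α_ (dual X) (dual Y) ((Y ⊗ X) ⊗ dual (Y ⊗ X))).hom
      ≫ (dual X ◁ ((dual Y ◁ (α_ Y X (dual (Y ⊗ X))).hom)
            ≫ (α_ (dual Y) Y (X ⊗ dual (Y ⊗ X))).inv
            ≫ (ev Y ▷ (X ⊗ dual (Y ⊗ X))) ≫ (λ_ (X ⊗ dual (Y ⊗ X))).hom))
      ≫ (α_ (dual X) X (dual (Y ⊗ X))).inv ≫ (ev X ▷ dual (Y ⊗ X)) ≫ (λ_ (dual (Y ⊗ X))).hom
    = (λ_ (dual X ⊗ dual Y)).inv ≫ (coev' (Y ⊗ X) ▷ (dual X ⊗ dual Y))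
      ≫ (α_ (dual (Y ⊗ X)) (Y ⊗ X) (dual X ⊗ dual Y)).hom
      ≫ (dual (Y ⊗ X) ◁ ((α_ Y X (dual X ⊗ dual Y)).hom
            ≫ (Y ◁ ((α_ X (dual X) (dual Y)).inv ≫ (ev' X ▷ dual Y) ≫ (λ_ (dual Y)).hom))
            ≫ ev' Y))
      ≫ (ρ_ (dual (Y ⊗ X))).hom
  unit_ev : (ρ_ (dual (𝟙_ C))).inv ≫ ev (𝟙_ C) = (λ_ (dual (𝟙_ C))).inv ≫ ev' (𝟙_ C)

namespace Pivotal

variable {C : Type u} [Category.{v} C] [MonoidalCategory C] [Pivotal C]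

/-- The dual of a morphism in a pivotal category. -/
def dualHom {X Y : C} (f : X ⟶ Y) : dual Y ⟶ dual X :=
  (ρ_ (dual Y)).inv ≫ (dual Y ◁ (coev X ≫ (f ▷ dual X)))
    ≫ (α_ (dual Y) Y (dual X)).inv ≫ (ev Y ▷ dual X) ≫ (λ_ (dual X)).hom

/-- The left trace of an endomorphism in a pivotal category. -/
def trl {X : C} (f : X ⟶ X) : 𝟙_ C ⟶ 𝟙_ C :=
  coev' X ≫ (dual X ◁ f) ≫ ev X

/-- The right trace of an endomorphism in a pivotal category. -/
def trr {X : C} (f : X ⟶ X) : 𝟙_ C ⟶ 𝟙_ C :=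
  coev X ≫ (f ▷ dual X) ≫ ev' X

/-- The left dimension of an object. -/
def diml (X : C) : 𝟙_ C ⟶ 𝟙_ C := trl (𝟙 X)

/-- The right dimension of an object. -/
def dimr (X : C) : 𝟙_ C ⟶ 𝟙_ C := trr (𝟙 X)

end Pivotal

open Pivotal

section Functors

variable {C : Type u} [Category.{v} C] [MonoidalCategory C] [Pivotal C]
variable {D : Type u₂} [Category.{v₂} D] [MonoidalCategory D] [Pivotal D]

/-- The canonical comparison morphism `F^l(X) : F(X^*) ⟶ F(X)^*` for a strong monoidal
functor between pivotal categories. -/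
def Fl (F : C ⥤ D) [m : F.Monoidal] (X : C) : F.obj (dual X) ⟶ dual (F.obj X) :=
  (ρ_ (F.obj (dual X))).inv
    ≫ (F.obj (dual X) ◁ coev (F.obj X))
    ≫ (α_ (F.obj (dual X)) (F.obj X) (dual (F.obj X))).inv
    ≫ ((Functor.LaxMonoidal.μ F (dual X) X ≫ F.map (ev X) ≫ Functor.OplaxMonoidal.η F)
        ▷ dual (F.obj X))
    ≫ (λ_ (dual (F.obj X))).hom

/-- The canonical comparison morphism `F^r(X) : F(X^*) ⟶ F(X)^*` for a strong monoidal
functor between pivotal categories. -/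
def Fr (F : C ⥤ D) [m : F.Monoidal] (X : C) : F.obj (dual X) ⟶ dual (F.obj X) :=
  (λ_ (F.obj (dual X))).inv
    ≫ (coev' (F.obj X) ▷ F.obj (dual X))
    ≫ (α_ (dual (F.obj X)) (F.obj X) (F.obj (dual X))).hom
    ≫ (dual (F.obj X) ◁ (Functor.LaxMonoidal.μ F X (dual X) ≫ F.map (ev' X)
          ≫ Functor.OplaxMonoidal.η F))
    ≫ (ρ_ (dual (F.obj X))).hom

end Functors


section MonHelpers
variable {C : Type u} [Category.{v} C] [MonoidalCategory C]
variable {D : Type u₂} [Category.{v₂} D] [MonoidalCategory D]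

/-- The unit morphism of a monoidal functor (with explicit monoidal structure). -/
def mε (F : C ⥤ D) (m : F.Monoidal) : 𝟙_ D ⟶ F.obj (𝟙_ C) :=
  letI := m; Functor.LaxMonoidal.ε F

/-- The tensorator of a monoidal functor (with explicit monoidal structure). -/
def mμ (F : C ⥤ D) (m : F.Monoidal) (X Y : C) : F.obj X ⊗ F.obj Y ⟶ F.obj (X ⊗ Y) :=
  letI := m; Functor.LaxMonoidal.μ F X Y

/-- The inverse of the unit morphism of a monoidal functor. -/
def mη (F : C ⥤ D) (m : F.Monoidal) : F.obj (𝟙_ C) ⟶ 𝟙_ D :=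
  letI := m; Functor.OplaxMonoidal.η F

/-- The inverse of the tensorator of a monoidal functor. -/
def mδ (F : C ⥤ D) (m : F.Monoidal) (X Y : C) : F.obj (X ⊗ Y) ⟶ F.obj X ⊗ F.obj Y :=
  letI := m; Functor.OplaxMonoidal.δ F X Y

end MonHelpers

section Graded

variable (k : Type w) [CommRing k] (G : Type x) [Group G]
variable (C : Type u) [Category.{v} C] [MonoidalCategory C] [Pivotal C]
  [Preadditive C] [CategoryTheory.Linear k C] [MonoidalPreadditive C] [MonoidalLinear k C]

/-- A pivotal `G`-graded category over `k`: a system of pairwise disjoint homogeneous degrees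
for objects such that the unit is of degree `1`, monoidal products multiply the degrees,
duals invert degrees, and morphisms between objects of different degrees vanish. -/
structure GGraded where
  mem : C → G → Prop
  mem_unique : ∀ {X : C} {a b : G}, mem X a → mem X b → a = b
  unit_mem : mem (𝟙_ C) 1
  tensor_mem : ∀ {X Y : C} {a b : G}, mem X a → mem Y b → mem (X ⊗ Y) (a * b)
  dual_mem : ∀ {X : C} {a : G}, mem X a → mem (Pivotal.dual X) a⁻¹
  hom_vanish : ∀ {X Y : C} {a b : G}, mem X a → mem Y b → a ≠ b → ∀ f : X ⟶ Y, f = 0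

variable {G C}

/-- The canonical identification `(φ a).obj X ⟶ (φ b).obj X` induced by an equality `a = b`. -/
def φObjCast (φ : G → C ⥤ C) {a b : G} (h : a = b) (X : C) : (φ a).obj X ⟶ (φ b).obj X :=
  eqToHom (by rw [h])

variable (G C)

/-- A (pivotal) `G`-crossed category: a pivotal `G`-graded category equipped with a crossing,
i.e. a strong monoidal functor from `G` to the monoidal category of `k`-linear strong monoidal
auto-equivalences of `C`, such that `φ a` maps degree `b` to degree `a⁻¹ * b * a`. -/
structure GCrossedCat extends GGraded G C where
  φ : G → C ⥤ C
  φM : ∀ a : G, (φ a).Monoidal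
  φ_add : ∀ (a : G) {X Y : C} (f g : X ⟶ Y), (φ a).map (f + g) = (φ a).map f + (φ a).map g
  φ_smul : ∀ (a : G) (c : k) {X Y : C} (f : X ⟶ Y), (φ a).map (c • f) = c • (φ a).map f
  φ_equiv : ∀ a : G, (φ a).IsEquivalence
  φ_mem : ∀ (a : G) {X : C} {b : G}, mem X b → mem ((φ a).obj X) (a⁻¹ * b * a)
  φ₂ : ∀ (a b : G) (X : C), (φ a).obj ((φ b).obj X) ≅ (φ (b * a)).obj X
  φ₀ : ∀ X : C, X ≅ (φ (1 : G)).obj X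
  φ₂_natural : ∀ (a b : G) {X Y : C} (f : X ⟶ Y),
    (φ a).map ((φ b).map f) ≫ (φ₂ a b Y).hom = (φ₂ a b X).hom ≫ (φ (b * a)).map f
  φ₀_natural : ∀ {X Y : C} (f : X ⟶ Y),
    f ≫ (φ₀ Y).hom = (φ₀ X).hom ≫ (φ (1 : G)).map f
  φ₂_monoidal : ∀ (a b : G) (X Y : C),
    mμ (φ a) (φM a) ((φ b).obj X) ((φ b).obj Y)
        ≫ (φ a).map (mμ (φ b) (φM b) X Y)
        ≫ (φ₂ a b (X ⊗ Y)).hom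
      = ((φ₂ a b X).hom ⊗ₘ (φ₂ a b Y).hom) ≫ mμ (φ (b * a)) (φM (b * a)) X Y
  φ₂_unit : ∀ (a b : G),
    mε (φ (b * a)) (φM (b * a))
      = mε (φ a) (φM a) ≫ (φ a).map (mε (φ b) (φM b)) ≫ (φ₂ a b (𝟙_ C)).hom
  φ₀_monoidal : ∀ X Y : C,
    (φ₀ (X ⊗ Y)).hom
      = ((φ₀ X).hom ⊗ₘ (φ₀ Y).hom) ≫ mμ (φ (1 : G)) (φM 1) X Y
  φ₀_unit : (φ₀ (𝟙_ C)).hom = mε (φ (1 : G)) (φM 1)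
  φ_assoc : ∀ (a b c : G) (X : C),
    (φ₂ a b ((φ c).obj X)).hom ≫ (φ₂ (b * a) c X).hom
      = (φ a).map ((φ₂ b c X).hom) ≫ (φ₂ a (c * b) X).hom
          ≫ φObjCast φ (mul_assoc c b a) X
  φ_unit_left : ∀ (a : G) (X : C),
    (φ a).map ((φ₀ X).hom) ≫ (φ₂ a 1 X).hom ≫ φObjCast φ (one_mul a) X = 𝟙 ((φ a).obj X)
  φ_unit_right : ∀ (a : G) (X : C),
    (φ₀ ((φ a).obj X)).hom ≫ (φ₂ 1 a X).hom ≫ φObjCast φ (mul_one a) X = 𝟙 ((φ a).obj X)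

variable {k G C}

namespace GCrossedCat

variable (𝒞 : GCrossedCat k G C)

/-- The crossing of `𝒞` is pivotal if each functor `φ a` is pivotal, i.e. `F^l = F^r`. -/
def PivotalCrossing : Prop :=
  ∀ (a : G) (X : C), Fl (𝒞.φ a) (m := 𝒞.φM a) X = Fr (𝒞.φ a) (m := 𝒞.φM a) X

/-- Given (the inverse `ψi` of) an isomorphism `ψ : X ≅ (φ a).obj Y`, this is the isomorphism
`overline ψ : Y ⟶ (φ a⁻¹).obj X`, defined as `φ_{a⁻¹}(ψ⁻¹) ∘ φ₂(a⁻¹,a)_Y⁻¹ ∘ (φ₀)_Y`. -/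
def barHom {X Y : C} {a : G} (ψi : (𝒞.φ a).obj Y ⟶ X) : Y ⟶ (𝒞.φ a⁻¹).obj X :=
  (𝒞.φ₀ Y).hom ≫ φObjCast 𝒞.φ (show (1 : G) = a * a⁻¹ by group) Y
    ≫ (𝒞.φ₂ a⁻¹ a Y).inv ≫ (𝒞.φ a⁻¹).map ψi

lemma mem_φ_self {X : C} {a : G} (h : 𝒞.mem X a) : 𝒞.mem ((𝒞.φ a).obj X) a := by
  have h2 : a⁻¹ * a * a = a := by group
  have := 𝒞.φ_mem a h
  rwa [h2] at this

end GCrossedCat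

end Graded

section Braided

variable (k : Type w) [CommRing k] (G : Type x) [Group G]
variable (C : Type u) [Category.{v} C] [MonoidalCategory C] [Pivotal C]
  [Preadditive C] [CategoryTheory.Linear k C] [MonoidalPreadditive C] [MonoidalLinear k C]

/-- A `G`-braided category: a `G`-crossed category equipped with a `G`-braiding
`τ_{X,Y} : X ⊗ Y ⟶ Y ⊗ φ_{|Y|}(X)` (for `Y` homogeneous), natural in both variables,
satisfying the two hexagon-type axioms and invariance under the crossing. -/
structure GBraidedCat extends GCrossedCat k G C where
  τ : ∀ (X Y : C) (b : G), mem Y b → (X ⊗ Y ⟶ Y ⊗ (φ b).obj X)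
  τ_iso : ∀ (X Y : C) (b : G) (h : mem Y b), IsIso (τ X Y b h)
  τ_nat_left : ∀ {X X' : C} (f : X ⟶ X') (Y : C) (b : G) (h : mem Y b),
    (f ▷ Y) ≫ τ X' Y b h = τ X Y b h ≫ (Y ◁ (φ b).map f)
  τ_nat_right : ∀ (X : C) {Y Y' : C} (b : G) (h : mem Y b) (h' : mem Y' b) (g : Y ⟶ Y'),
    (X ◁ g) ≫ τ X Y' b h' = τ X Y b h ≫ (g ▷ (φ b).obj X)
  braiding₁ : ∀ (X Y Z : C) (b c : G) (hY : mem Y b) (hZ : mem Z c),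
    τ X (Y ⊗ Z) (b * c) (tensor_mem hY hZ)
      = (α_ X Y Z).inv ≫ (τ X Y b hY ▷ Z) ≫ (α_ Y ((φ b).obj X) Z).hom
          ≫ (Y ◁ τ ((φ b).obj X) Z c hZ) ≫ (α_ Y Z ((φ c).obj ((φ b).obj X))).inv
          ≫ ((Y ⊗ Z) ◁ (φ₂ c b X).hom)
  braiding₂ : ∀ (X Y Z : C) (c : G) (hZ : mem Z c),
    τ (X ⊗ Y) Z c hZ
      = (α_ X Y Z).hom ≫ (X ◁ τ Y Z c hZ) ≫ (α_ X Z ((φ c).obj Y)).inv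
          ≫ (τ X Z c hZ ▷ (φ c).obj Y) ≫ (α_ Z ((φ c).obj X) ((φ c).obj Y)).hom
          ≫ (Z ◁ mμ (φ c) (φM c) X Y)
  braiding₃ : ∀ (a : G) (X Y : C) (b : G) (hY : mem Y b),
    τ ((φ a).obj X) ((φ a).obj Y) (a⁻¹ * b * a) (φ_mem a hY)
        ≫ ((φ a).obj Y ◁ ((φ₂ (a⁻¹ * b * a) a X).hom
              ≫ φObjCast φ (show a * (a⁻¹ * b * a) = b * a by group) X
              ≫ (φ₂ a b X).inv))
        ≫ mμ (φ a) (φM a) Y ((φ b).obj X)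
      = mμ (φ a) (φM a) X Y ≫ (φ a).map (τ X Y b hY)

variable {k G C}

namespace GBraidedCat

variable (𝒞 : GBraidedCat k G C)

/-- The inverse of the `G`-braiding. -/
noncomputable def τinv (X Y : C) (b : G) (h : 𝒞.mem Y b) : Y ⊗ (𝒞.φ b).obj X ⟶ X ⊗ Y :=
  letI := 𝒞.τ_iso X Y b h
  inv (𝒞.τ X Y b h)

/-- The twist `θ_X = (ev_X ⊗ id)(id_{X^*} ⊗ τ_{X,X})(coev'_X ⊗ id_X) : X ⟶ φ_{|X|}(X)`. -/
def twist (X : C) (a : G) (h : 𝒞.mem X a) : X ⟶ (𝒞.φ a).obj X :=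
  (λ_ X).inv ≫ (coev' X ▷ X) ≫ (α_ (dual X) X X).hom
    ≫ (dual X ◁ 𝒞.τ X X a h) ≫ (α_ (dual X) X ((𝒞.φ a).obj X)).inv
    ≫ (ev X ▷ (𝒞.φ a).obj X) ≫ (λ_ ((𝒞.φ a).obj X)).hom

/-- The braiding of the neutral component `C_1`. -/
def nBraiding (X Y : C) (hY : 𝒞.mem Y 1) : X ⊗ Y ⟶ Y ⊗ X :=
  𝒞.τ X Y 1 hY ≫ (Y ◁ (𝒞.φ₀ X).inv)

/-- The twist of the neutral component `C_1`. -/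
def nTwist (X : C) (hX : 𝒞.mem X 1) : X ⟶ X :=
  𝒞.twist X 1 hX ≫ (𝒞.φ₀ X).inv

end GBraidedCat

variable (k G C)

/-- A `G`-ribbon category: a pivotal `G`-braided category whose crossing is pivotal and
whose twist is self-dual. -/
structure GRibbonCat extends GBraidedCat k G C where
  crossing_pivotal : toGCrossedCat.PivotalCrossing
  twist_selfdual : ∀ (X : C) (a : G) (hX : mem X a),
    Pivotal.dualHom (toGBraidedCat.twist X a hX)
      = toGBraidedCat.twist (dual ((φ a).obj X)) a⁻¹
            (dual_mem (toGCrossedCat.mem_φ_self hX))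
          ≫ Fl (φ a⁻¹) (m := φM a⁻¹) ((φ a).obj X)
          ≫ Pivotal.dualHom
              (φObjCast φ (show (1 : G) = a * a⁻¹ by group) X ≫ (φ₂ a⁻¹ a X).inv)
          ≫ Pivotal.dualHom (φ₀ X).hom

end Braided

section FusionAlg

variable {k : Type w} [CommRing k] {G : Type x} [Group G]
variable {C : Type u} [Category.{v} C] [MonoidalCategory C] [Pivotal C]
  [Preadditive C] [CategoryTheory.Linear k C] [MonoidalPreadditive C] [MonoidalLinear k C]

variable (k) (gr : GGraded G C)

/-- The homogeneous objects of a `G`-graded category. -/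
def Homog : Type _ := {X : C // ∃ a : G, gr.mem X a}

/-- The direct sum `⊕_X End(X)` over all homogeneous objects `X`. -/
abbrev Ltilde : Type _ := DirectSum (Homog gr) (fun X => (X.1 ⟶ X.1))

/-- The canonical inclusion of `End(X)` into `Ltilde`. -/
noncomputable def lofh (X : C) {a : G} (hX : gr.mem X a) (f : X ⟶ X) : Ltilde gr :=
  letI := Classical.decEq (Homog gr)
  DirectSum.lof k (Homog gr) (fun X => (X.1 ⟶ X.1)) ⟨X, ⟨a, hX⟩⟩ f

/-- The submodule of trace relations `⟨X, fg⟩ - ⟨Y, gf⟩`. -/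
noncomputable def fusionRel : Submodule k (Ltilde gr) :=
  Submodule.span k
    {x | ∃ (X Y : C) (a : G) (hX : gr.mem X a) (hY : gr.mem Y a) (f : Y ⟶ X) (g : X ⟶ Y),
      x = lofh k gr X hX (g ≫ f) - lofh k gr Y hY (f ≫ g)}

/-- The fusion algebra (as a `k`-module) of a `G`-graded category. -/
abbrev FusionL : Type _ := Ltilde gr ⧸ fusionRel k gr

/-- The class `⟨X, f⟩` of an endomorphism of a homogeneous object in the fusion algebra. -/
noncomputable def fcls (X : C) {a : G} (hX : gr.mem X a) (f : X ⟶ X) : FusionL k gr :=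
  Submodule.Quotient.mk (lofh k gr X hX f)

/-- The degree-`a` part of the fusion algebra. -/
noncomputable def FusionLsub (a : G) : Submodule k (FusionL k gr) :=
  Submodule.span k {x | ∃ (X : C) (hX : gr.mem X a) (f : X ⟶ X), x = fcls k gr X hX f}

end FusionAlg

section Fusion

variable (k : Type w) [CommRing k]
variable {C : Type u} [Category.{v} C] [Preadditive C] [CategoryTheory.Linear k C]

/-- An object `X` is simple if `End(X)` is a free `k`-module of rank one with basis `id_X`. -/
def SimpleObj (X : C) : Prop := ∀ f : X ⟶ X, ∃! c : k, f = c • 𝟙 X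

variable (C) [MonoidalCategory C] [Pivotal C] [MonoidalPreadditive C] [MonoidalLinear k C]
  [HasFiniteBiproducts C]

/-- A pre-fusion category over `k`: a split semisimple `k`-additive pivotal category
with simple unit object. -/
structure PreFusion : Prop where
  semisimple : ∀ X : C, ∃ (n : ℕ) (s : Fin n → C),
    (∀ i, SimpleObj k (s i)) ∧ Nonempty (X ≅ ⨁ s)
  hom_vanish : ∀ {X Y : C}, SimpleObj k X → SimpleObj k Y → IsEmpty (X ≅ Y) →
    ∀ f : X ⟶ Y, f = 0
  unit_simple : SimpleObj k (𝟙_ C)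

end Fusion

/-!
A morphism into a dual object `Z^*` is determined by its pairing with `ev Z`, so identities
between such morphisms can be checked after pairing. The isomorphisms `φ₀`, `φ₂` assemble into
a monoidal natural isomorphism `κ : 1 ≅ φ_{a⁻¹} ∘ φ_a` with `overline ψ = κ_Y ≫ φ_{a⁻¹}(ψ⁻¹)`,
and for any monoidal natural transformation `κ : 1 ⟶ F` monoidality gives
`κ_{X^*} ≫ F^l(X) = (κ_X⁻¹)^*`. Since `F^l` is natural and compatible with composition of
functors, `overline (ψ⁻) ≫ φ_{a⁻¹}^l(X)` becomes
`κ_{Y^*} ≫ (φ_{a⁻¹} ∘ φ_a)^l(Y) ≫ (φ_{a⁻¹} ψ)^* = (φ_{a⁻¹}(ψ) ≫ κ_Y⁻¹)^* = ((overline ψ)⁻¹)^*`.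
-/

namespace Pivotal

variable {C : Type u} [Category.{v} C] [MonoidalCategory C] [Pivotal C]

def transpose {B X : C} (h : B ⊗ X ⟶ 𝟙_ C) : B ⟶ dual X :=
  (ρ_ B).inv ≫ (B ◁ coev X) ≫ (α_ B X (dual X)).inv ≫ (h ▷ dual X) ≫ (λ_ (dual X)).hom

lemma transpose_whiskerRight_ev {B X : C} (h : B ⊗ X ⟶ 𝟙_ C) :
    (transpose h ▷ X) ≫ ev X = h := by
  have slide : ((h ▷ dual X) ▷ X) ≫ ((λ_ (dual X)).hom ▷ X) ≫ ev X
      = (α_ (B ⊗ X) (dual X) X).hom ≫ ((B ⊗ X) ◁ ev X) ≫ (ρ_ (B ⊗ X)).hom ≫ h := by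
    rw [leftUnitor_whiskerRight, Category.assoc, associator_naturality_left_assoc,
      ← leftUnitor_naturality, ← whisker_exchange_assoc, unitors_equal,
      rightUnitor_naturality]
  calc (transpose h ▷ X) ≫ ev X
      = (B ◁ ((λ_ X).inv ≫ (coev X ▷ X) ≫ (α_ X (dual X) X).hom ≫ (X ◁ ev X)
          ≫ (ρ_ X).hom)) ≫ h := by
        simp only [transpose, comp_whiskerRight, Category.assoc, slide]
        monoidal
    _ = h := by rw [zig₁, MonoidalCategory.whiskerLeft_id, Category.id_comp]

lemma transpose_whiskerRight_comp_ev {B X : C} (g : B ⟶ dual X) :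
    transpose ((g ▷ X) ≫ ev X) = g := by
  conv_rhs => rw [← Category.comp_id g, ← zig₂ X]
  simp only [transpose, comp_whiskerRight, Category.assoc]
  rw [rightUnitor_inv_naturality_assoc, ← whisker_exchange_assoc,
    associator_inv_naturality_left_assoc]

lemma dual_hom_ext {B X : C} {g₁ g₂ : B ⟶ dual X}
    (h : (g₁ ▷ X) ≫ ev X = (g₂ ▷ X) ≫ ev X) : g₁ = g₂ := by
  rw [← transpose_whiskerRight_comp_ev g₁, h, transpose_whiskerRight_comp_ev]

lemma dualHom_eq_transpose {X Y : C} (f : X ⟶ Y) :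
    dualHom f = transpose ((dual Y ◁ f) ≫ ev Y) := by
  simp only [dualHom, transpose, MonoidalCategory.whiskerLeft_comp, comp_whiskerRight,
    Category.assoc, associator_inv_naturality_middle_assoc]

lemma dualHom_whiskerRight_ev {X Y : C} (f : X ⟶ Y) :
    (dualHom f ▷ X) ≫ ev X = (dual Y ◁ f) ≫ ev Y := by
  rw [dualHom_eq_transpose, transpose_whiskerRight_ev]

@[simp]
lemma dualHom_id (X : C) : dualHom (𝟙 X) = 𝟙 (dual X) :=
  dual_hom_ext (by simp [dualHom_whiskerRight_ev])

lemma dualHom_comp {X Y Z : C} (f : X ⟶ Y) (g : Y ⟶ Z) :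
    dualHom (f ≫ g) = dualHom g ≫ dualHom f := by
  refine dual_hom_ext ?_
  rw [comp_whiskerRight, Category.assoc, dualHom_whiskerRight_ev, dualHom_whiskerRight_ev,
    ← whisker_exchange_assoc, dualHom_whiskerRight_ev, MonoidalCategory.whiskerLeft_comp_assoc]

end Pivotal

section Functors

open Functor.LaxMonoidal Functor.OplaxMonoidal

variable {C : Type u} [Category.{v} C] [MonoidalCategory C] [Pivotal C]
variable {D : Type u₂} [Category.{v₂} D] [MonoidalCategory D] [Pivotal D]
variable {E : Type u₃} [Category.{v₃} E] [MonoidalCategory E] [Pivotal E]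

lemma Fl_whiskerRight_ev (F : C ⥤ D) [F.Monoidal] (X : C) :
    (Fl F X ▷ F.obj X) ≫ ev (F.obj X) = μ F (dual X) X ≫ F.map (ev X) ≫ η F :=
  transpose_whiskerRight_ev _

lemma Fl_naturality (F : C ⥤ D) [F.Monoidal] {X Y : C} (f : X ⟶ Y) :
    F.map (dualHom f) ≫ Fl F X = Fl F Y ≫ dualHom (F.map f) := by
  refine dual_hom_ext ?_
  simp only [comp_whiskerRight, Category.assoc, Fl_whiskerRight_ev, dualHom_whiskerRight_ev]
  rw [μ_natural_left_assoc, ← F.map_comp_assoc, dualHom_whiskerRight_ev, F.map_comp_assoc,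
    ← μ_natural_right_assoc, ← whisker_exchange_assoc, Fl_whiskerRight_ev]

lemma Fl_comp (F : C ⥤ D) (G : D ⥤ E) [F.Monoidal] [G.Monoidal] (X : C) :
    Fl (F ⋙ G) X = G.map (Fl F X) ≫ Fl G (F.obj X) := by
  refine dual_hom_ext ((Fl_whiskerRight_ev (F ⋙ G) X).trans ?_)
  dsimp only [Functor.comp_obj]
  rw [comp_whiskerRight, Category.assoc, Fl_whiskerRight_ev,
    μ_natural_left_assoc, ← G.map_comp_assoc, Fl_whiskerRight_ev]
  simp

lemma app_dual_comp_Fl_comp_dualHom (F : C ⥤ C) [F.Monoidal] (κ : 𝟭 C ⟶ F)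
    [NatTrans.IsMonoidal κ] (X : C) :
    κ.app (dual X) ≫ Fl F X ≫ dualHom (κ.app X) = 𝟙 (dual X) := by
  have hunit : κ.app (𝟙_ C) = ε F := by simpa using NatTrans.IsMonoidal.unit (τ := κ)
  refine dual_hom_ext ?_
  simp only [Functor.id_obj, comp_whiskerRight, Category.assoc, dualHom_whiskerRight_ev,
    id_whiskerRight, Category.id_comp]
  rw [← whisker_exchange_assoc, Fl_whiskerRight_ev, ← whisker_exchange_assoc,
    ← tensorHom_def'_assoc, ← NatTrans.IsMonoidal.tensor_assoc, ← κ.naturality_assoc, hunit]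
  simp

lemma hom_app_dual_comp_Fl (F : C ⥤ C) [F.Monoidal] (κ : 𝟭 C ≅ F)
    [NatTrans.IsMonoidal κ.hom] (X : C) :
    κ.hom.app (dual X) ≫ Fl F X = dualHom (κ.inv.app X) := by
  rw [← Category.comp_id (κ.hom.app (dual X) ≫ Fl F X), ← dualHom_id, ← κ.inv_hom_id_app X,
    dualHom_comp, Category.assoc, reassoc_of% app_dual_comp_Fl_comp_dualHom F κ.hom X]

end Functors

namespace GCrossedCat

open NatTrans

variable {k : Type w} [CommRing k] {G : Type x} [Group G]
variable {C : Type u} [Category.{v} C] [MonoidalCategory C] [Pivotal C]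
  [Preadditive C] [CategoryTheory.Linear k C] [MonoidalPreadditive C] [MonoidalLinear k C]
variable (𝒞 : GCrossedCat k G C)

instance φMonoidal (a : G) : (𝒞.φ a).Monoidal := 𝒞.φM a

def φ₀Iso : 𝟭 C ≅ 𝒞.φ 1 := NatIso.ofComponents 𝒞.φ₀ 𝒞.φ₀_natural

instance : IsMonoidal 𝒞.φ₀Iso.hom where
  unit := by simpa [φ₀Iso, mε] using 𝒞.φ₀_unit
  tensor X Y := by simpa [φ₀Iso, mμ] using 𝒞.φ₀_monoidal X Y

def φ₂Iso (a b : G) : 𝒞.φ b ⋙ 𝒞.φ a ≅ 𝒞.φ (b * a) :=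
  NatIso.ofComponents (𝒞.φ₂ a b) (𝒞.φ₂_natural a b)

instance (a b : G) : IsMonoidal (𝒞.φ₂Iso a b).hom where
  unit := by simpa [φ₂Iso, mε] using (𝒞.φ₂_unit a b).symm
  tensor X Y := by simpa [φ₂Iso, mμ] using 𝒞.φ₂_monoidal a b X Y

def φCastIso {b c : G} (h : b = c) : 𝒞.φ b ≅ 𝒞.φ c := eqToIso (congrArg 𝒞.φ h)

instance {b c : G} (h : b = c) : IsMonoidal (𝒞.φCastIso h).hom := by
  subst h
  exact IsMonoidal.id

def unitIso (a : G) : 𝟭 C ≅ 𝒞.φ a ⋙ 𝒞.φ a⁻¹ :=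
  𝒞.φ₀Iso ≪≫ 𝒞.φCastIso (mul_inv_cancel a).symm ≪≫ (𝒞.φ₂Iso a⁻¹ a).symm

instance (a : G) : IsMonoidal (𝒞.unitIso a).hom := by
  dsimp only [unitIso, Iso.trans_hom, Iso.symm_hom]
  infer_instance

lemma barHom_eq {X Y : C} {a : G} (ψi : (𝒞.φ a).obj Y ⟶ X) :
    𝒞.barHom ψi = (𝒞.unitIso a).hom.app Y ≫ (𝒞.φ a⁻¹).map ψi := by
  simp [barHom, unitIso, φ₀Iso, φ₂Iso, φCastIso, φObjCast, eqToHom_app]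

end GCrossedCat

section Statement

variable {k : Type w} [CommRing k] {G : Type x} [Group G]
variable {C : Type u} [Category.{v} C] [MonoidalCategory C] [Pivotal C]
  [Preadditive C] [CategoryTheory.Linear k C] [MonoidalPreadditive C] [MonoidalLinear k C]

theorem statement6_general (𝒞 : GCrossedCat k G C)
    {X Y : C} (a : G) (ψ : X ⟶ (𝒞.φ a).obj Y) (ψi : (𝒞.φ a).obj Y ⟶ X)
    (hψ : ψ ≫ ψi = 𝟙 X)
    -- `mns` is the isomorphism `ψ⁻ : X^* ⟶ φ_a(Y^*)`, characterized by
    -- `ψ⁻ ≫ φ_a^1(Y) = (ψ⁻¹)^*`, and `mi` is its inverse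
    (mns : dual X ⟶ (𝒞.φ a).obj (dual Y))
    (hm : mns ≫ Fl (𝒞.φ a) (m := 𝒞.φM a) Y = dualHom ψi)
    (mi : (𝒞.φ a).obj (dual Y) ⟶ dual X)
    (hmi' : mi ≫ mns = 𝟙 ((𝒞.φ a).obj (dual Y)))
    -- `bψi` is the inverse of `overline ψ : Y ⟶ φ_{a⁻¹}(X)`
    (bψi : (𝒞.φ a⁻¹).obj X ⟶ Y)
    (hb : 𝒞.barHom ψi ≫ bψi = 𝟙 Y) :
    -- `overline (ψ⁻) = (overline ψ)⁻`, where the right-hand side is characterized by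
    -- composing with `φ_{a⁻¹}^1(X)`:
    𝒞.barHom mi ≫ Fl (𝒞.φ a⁻¹) (m := 𝒞.φM a⁻¹) X = dualHom bψi := by
  have mi_eq : mi = Fl (𝒞.φ a) Y ≫ dualHom ψ :=
    calc mi = mi ≫ dualHom (ψ ≫ ψi) := by rw [hψ, dualHom_id, Category.comp_id]
      _ = Fl (𝒞.φ a) Y ≫ dualHom ψ := by
        rw [dualHom_comp, ← hm, Category.assoc, reassoc_of% hmi']
  have bψi_eq : bψi = (𝒞.φ a⁻¹).map ψ ≫ (𝒞.unitIso a).inv.app Y :=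
    calc bψi = ((𝒞.φ a⁻¹).map ψ ≫ (𝒞.unitIso a).inv.app Y ≫ 𝒞.barHom ψi) ≫ bψi := by
          rw [𝒞.barHom_eq]
          simp [← Functor.map_comp, hψ]
      _ = (𝒞.φ a⁻¹).map ψ ≫ (𝒞.unitIso a).inv.app Y := by
        rw [Category.assoc, Category.assoc, hb]
        erw [Category.comp_id]
  calc 𝒞.barHom mi ≫ Fl (𝒞.φ a⁻¹) X
      = (𝒞.unitIso a).hom.app (dual Y) ≫ (𝒞.φ a⁻¹).map (Fl (𝒞.φ a) Y)
          ≫ (𝒞.φ a⁻¹).map (dualHom ψ) ≫ Fl (𝒞.φ a⁻¹) X := by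
        rw [𝒞.barHom_eq, mi_eq]
        simp
    _ = (𝒞.unitIso a).hom.app (dual Y) ≫ Fl (𝒞.φ a ⋙ 𝒞.φ a⁻¹) Y
          ≫ dualHom ((𝒞.φ a⁻¹).map ψ) := by
        rw [Fl_naturality, Fl_comp, Category.assoc]
    _ = dualHom bψi := by
        rw [reassoc_of% hom_app_dual_comp_Fl, ← dualHom_comp, bψi_eq]

theorem statement6 (𝒞 : GCrossedCat k G C) (hpiv : 𝒞.PivotalCrossing)
    {X Y : C} (a : G) (ψ : X ⟶ (𝒞.φ a).obj Y) (ψi : (𝒞.φ a).obj Y ⟶ X)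
    (hψ : ψ ≫ ψi = 𝟙 X) (hψ' : ψi ≫ ψ = 𝟙 ((𝒞.φ a).obj Y))
    -- `mns` is the isomorphism `ψ⁻ : X^* ⟶ φ_a(Y^*)`, characterized by
    -- `ψ⁻ ≫ φ_a^1(Y) = (ψ⁻¹)^*`, and `mi` is its inverse
    (mns : dual X ⟶ (𝒞.φ a).obj (dual Y))
    (hm : mns ≫ Fl (𝒞.φ a) (m := 𝒞.φM a) Y = dualHom ψi)
    (mi : (𝒞.φ a).obj (dual Y) ⟶ dual X)
    (hmi : mns ≫ mi = 𝟙 (dual X)) (hmi' : mi ≫ mns = 𝟙 ((𝒞.φ a).obj (dual Y)))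
    -- `bψi` is the inverse of `overline ψ : Y ⟶ φ_{a⁻¹}(X)`
    (bψi : (𝒞.φ a⁻¹).obj X ⟶ Y)
    (hb : 𝒞.barHom ψi ≫ bψi = 𝟙 Y) (hb' : bψi ≫ 𝒞.barHom ψi = 𝟙 ((𝒞.φ a⁻¹).obj X)) :
    -- `overline (ψ⁻) = (overline ψ)⁻`, where the right-hand side is characterized by
    -- composing with `φ_{a⁻¹}^1(X)`:
    𝒞.barHom mi ≫ Fl (𝒞.φ a⁻¹) (m := 𝒞.φM a⁻¹) X = dualHom bψi :=
  statement6_general 𝒞 a ψ ψi hψ mns hm mi hmi' bψi hb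

end Statement

end SurgeryHQFT
end

section
/- In a pivotal G-braided category with pivotal crossing φ, the twist is compatible with the crossing: for all α, β ∈ G and X ∈ C_α, φ_β(θ_X) = φ_2(β,α)_X^{-1} ∘ φ_2(β^{-1}αβ, β)_X ∘ θ_{φ_β(X)}. -/
set_option linter.unusedSectionVars false

open CategoryTheory MonoidalCategory CategoryTheory.Limits

universe w x v u v₂ u₂ v₃ u₃

namespace SurgeryHQFT

open Pivotal

/-!
`θ_X` closes the left strand of `τ_{X,X}` with the cup `coev'_X` and the cap `ev_X`. A strong
monoidal functor `F` sends such a closure to the closure of `μ ∘ F(τ) ∘ δ` by the images of cup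
and cap. The image of `ev_X` is `ev_{FX} ∘ (F^l ⊗ id)`; sliding `F^l` onto the cup and using
`F^l = F^r`, the image of `coev'_X` becomes `coev'_{FX}` by the transported zig-zag identity.
For `F = φ_β`, the crossing invariance of `τ` turns `μ ∘ φ_β(τ_{X,X}) ∘ δ` into
`τ_{φ_β X, φ_β X}` followed by a correction on the output strand, which leaves the closure.
-/

section LeftClosure

open Functor.LaxMonoidal Functor.OplaxMonoidal

variable {C : Type u} [Category.{v} C] [MonoidalCategory C]

lemma whisker_exchange_unit_target {Z W : C} (f : Z ⟶ 𝟙_ C) (g : W ⟶ 𝟙_ C) :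
    (f ▷ W) ≫ (λ_ W).hom ≫ g = (Z ◁ g) ≫ (ρ_ Z).hom ≫ f := by
  calc (f ▷ W) ≫ (λ_ W).hom ≫ g
      = (f ▷ W) ≫ (𝟙_ C ◁ g) ≫ (λ_ (𝟙_ C)).hom := by rw [leftUnitor_naturality]
    _ = (Z ◁ g) ≫ (f ▷ 𝟙_ C) ≫ (λ_ (𝟙_ C)).hom := by rw [← whisker_exchange_assoc]
    _ = (Z ◁ g) ≫ (ρ_ Z).hom ≫ f := by rw [unitors_equal, rightUnitor_naturality]

lemma whisker_exchange_unit_source {Z W : C} (f : 𝟙_ C ⟶ Z) (g : 𝟙_ C ⟶ W) :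
    g ≫ (λ_ W).inv ≫ (f ▷ W) = f ≫ (ρ_ Z).inv ≫ (Z ◁ g) := by
  calc g ≫ (λ_ W).inv ≫ (f ▷ W)
      = (λ_ (𝟙_ C)).inv ≫ (𝟙_ C ◁ g) ≫ (f ▷ W) := by rw [leftUnitor_inv_naturality_assoc]
    _ = (λ_ (𝟙_ C)).inv ≫ (f ▷ 𝟙_ C) ≫ (Z ◁ g) := by rw [whisker_exchange]
    _ = f ≫ (ρ_ Z).inv ≫ (Z ◁ g) := by rw [unitors_inv_equal, ← rightUnitor_inv_naturality_assoc]

/-- Closing the left strand of `t` with the cup `K` and the cap `E`. -/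
def leftClosure {A X Y : C} (K : 𝟙_ C ⟶ A ⊗ X) (E : A ⊗ X ⟶ 𝟙_ C) (t : X ⊗ X ⟶ X ⊗ Y) :
    X ⟶ Y :=
  (λ_ X).inv ≫ (K ▷ X) ≫ (α_ A X X).hom ≫ (A ◁ t) ≫ (α_ A X Y).inv ≫ (E ▷ Y) ≫ (λ_ Y).hom

lemma leftClosure_whiskerRight_comp {A B X Y : C} (K : 𝟙_ C ⟶ A ⊗ X) (f : A ⟶ B)
    (E : B ⊗ X ⟶ 𝟙_ C) (t : X ⊗ X ⟶ X ⊗ Y) :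
    leftClosure K ((f ▷ X) ≫ E) t = leftClosure (K ≫ (f ▷ X)) E t := by
  simp only [leftClosure, comp_whiskerRight, Category.assoc]
  rw [← associator_inv_naturality_left_assoc, whisker_exchange_assoc,
    associator_naturality_left_assoc]

lemma leftClosure_comp_whiskerLeft {A X Y Z : C} (K : 𝟙_ C ⟶ A ⊗ X) (E : A ⊗ X ⟶ 𝟙_ C)
    (t : X ⊗ X ⟶ X ⊗ Y) (g : Y ⟶ Z) :
    leftClosure K E (t ≫ (X ◁ g)) = leftClosure K E t ≫ g := by
  simp only [leftClosure, whiskerLeft_comp, Category.assoc]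
  rw [associator_inv_naturality_right_assoc, whisker_exchange_assoc,
    leftUnitor_naturality]

variable {D : Type u₂} [Category.{v₂} D] [MonoidalCategory D]

lemma map_leftClosure (F : C ⥤ D) [F.Monoidal] {A X Y : C} (K : 𝟙_ C ⟶ A ⊗ X)
    (E : A ⊗ X ⟶ 𝟙_ C) (t : X ⊗ X ⟶ X ⊗ Y) :
    F.map (leftClosure K E t)
      = leftClosure (ε F ≫ F.map K ≫ δ F A X) (μ F A X ≫ F.map E ≫ η F)
          (μ F X X ≫ F.map t ≫ δ F X Y) := by
  simp only [leftClosure, F.map_comp, Functor.Monoidal.map_leftUnitor_inv,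
    Functor.Monoidal.map_whiskerRight, Functor.Monoidal.map_associator,
    Functor.Monoidal.map_whiskerLeft, Functor.Monoidal.map_associator_inv,
    Functor.Monoidal.map_leftUnitor, Category.assoc,
    Functor.Monoidal.μ_δ_assoc, whiskerLeft_comp, comp_whiskerRight]

end LeftClosure

section Transpose

open Functor.LaxMonoidal Functor.OplaxMonoidal

variable {C : Type u} [Category.{v} C] [MonoidalCategory C] [Pivotal C]

/- `Fl F X` and `Fr F X` are, by definition, `lTranspose` and `rTranspose` of the images of
`ev X` and `ev' X`. -/
def lTranspose {A B : C} (E : A ⊗ B ⟶ 𝟙_ C) : A ⟶ dual B :=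
  (ρ_ A).inv ≫ (A ◁ coev B) ≫ (α_ A B (dual B)).inv ≫ (E ▷ dual B) ≫ (λ_ (dual B)).hom

def rTranspose {A B : C} (E' : B ⊗ A ⟶ 𝟙_ C) : A ⟶ dual B :=
  (λ_ A).inv ≫ (coev' B ▷ A) ≫ (α_ (dual B) B A).hom ≫ (dual B ◁ E') ≫ (ρ_ (dual B)).hom

lemma lTranspose_whiskerRight_ev {A B : C} (E : A ⊗ B ⟶ 𝟙_ C) :
    (lTranspose E ▷ B) ≫ ev B = E := by
  calc (lTranspose E ▷ B) ≫ ev B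
      = ((ρ_ A).inv ▷ B) ≫ ((A ◁ coev B) ▷ B) ≫ ((α_ A B (dual B)).inv ▷ B)
          ≫ (α_ (A ⊗ B) (dual B) B).hom
          ≫ ((E ▷ (dual B ⊗ B)) ≫ (λ_ (dual B ⊗ B)).hom ≫ ev B) := by
        simp only [lTranspose]; monoidal
    _ = ((ρ_ A).inv ▷ B) ≫ ((A ◁ coev B) ▷ B) ≫ ((α_ A B (dual B)).inv ▷ B)
          ≫ (α_ (A ⊗ B) (dual B) B).hom
          ≫ (((A ⊗ B) ◁ ev B) ≫ (ρ_ (A ⊗ B)).hom ≫ E) := by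
        rw [whisker_exchange_unit_target]
    _ = (A ◁ ((λ_ B).inv ≫ (coev B ▷ B) ≫ (α_ B (dual B) B).hom ≫ (B ◁ ev B)
          ≫ (ρ_ B).hom)) ≫ E := by
        monoidal
    _ = E := by rw [Pivotal.zig₁]; simp

lemma comp_rTranspose_whiskerRight {A B : C} (K : 𝟙_ C ⟶ A ⊗ B) (E' : B ⊗ A ⟶ 𝟙_ C)
    (hzig : (ρ_ B).inv ≫ (B ◁ K) ≫ (α_ B A B).inv ≫ (E' ▷ B) ≫ (λ_ B).hom = 𝟙 B) :
    K ≫ (rTranspose E' ▷ B) = coev' B := by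
  calc K ≫ (rTranspose E' ▷ B)
      = (K ≫ (λ_ (A ⊗ B)).inv ≫ (coev' B ▷ (A ⊗ B)))
          ≫ (α_ (dual B) B (A ⊗ B)).hom ≫ (dual B ◁ (α_ B A B).inv)
          ≫ (dual B ◁ (E' ▷ B)) ≫ (dual B ◁ (λ_ B).hom) := by
        simp only [rTranspose]; monoidal
    _ = (coev' B ≫ (ρ_ (dual B ⊗ B)).inv ≫ ((dual B ⊗ B) ◁ K))
          ≫ (α_ (dual B) B (A ⊗ B)).hom ≫ (dual B ◁ (α_ B A B).inv)
          ≫ (dual B ◁ (E' ▷ B)) ≫ (dual B ◁ (λ_ B).hom) := by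
        rw [whisker_exchange_unit_source]
    _ = coev' B ≫ (dual B ◁ ((ρ_ B).inv ≫ (B ◁ K) ≫ (α_ B A B).inv ≫ (E' ▷ B)
          ≫ (λ_ B).hom)) := by
        monoidal
    _ = coev' B := by rw [hzig]; simp

variable {D : Type u₂} [Category.{v₂} D] [MonoidalCategory D] [Pivotal D]

lemma map_zig₃ (F : C ⥤ D) [F.Monoidal] (X : C) :
    (ρ_ (F.obj X)).inv
      ≫ (F.obj X ◁ (ε F ≫ F.map (coev' X) ≫ δ F (dual X) X))
      ≫ (α_ (F.obj X) (F.obj (dual X)) (F.obj X)).inv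
      ≫ ((μ F X (dual X) ≫ F.map (ev' X) ≫ η F) ▷ F.obj X)
      ≫ (λ_ (F.obj X)).hom = 𝟙 (F.obj X) := by
  have h := congrArg F.map (Pivotal.zig₃ X)
  simp only [F.map_comp, F.map_id, Functor.Monoidal.map_rightUnitor_inv,
    Functor.Monoidal.map_whiskerLeft, Functor.Monoidal.map_associator_inv,
    Functor.Monoidal.map_whiskerRight, Functor.Monoidal.map_leftUnitor,
    Category.assoc, Functor.Monoidal.μ_δ_assoc] at h
  simpa only [whiskerLeft_comp, comp_whiskerRight, Category.assoc] using h

lemma map_leftClosure_coev'_ev (F : C ⥤ D) [F.Monoidal] {X Y : C}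
    (hF : Fl F X = Fr F X) (t : X ⊗ X ⟶ X ⊗ Y) :
    F.map (leftClosure (coev' X) (ev X) t)
      = leftClosure (coev' (F.obj X)) (ev (F.obj X)) (μ F X X ≫ F.map t ≫ δ F X Y) := by
  rw [map_leftClosure F, ← lTranspose_whiskerRight_ev (μ F (dual X) X ≫ F.map (ev X) ≫ η F),
    leftClosure_whiskerRight_comp]
  change leftClosure (_ ≫ (Fl F X ▷ _)) _ _ = _
  rw [hF]
  exact congrArg (leftClosure · _ _) (comp_rTranspose_whiskerRight _ _ (map_zig₃ F X))

end Transpose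

section Statement

variable {k : Type w} [CommRing k] {G : Type x} [Group G]
variable {C : Type u} [Category.{v} C] [MonoidalCategory C] [Pivotal C]
  [Preadditive C] [CategoryTheory.Linear k C] [MonoidalPreadditive C] [MonoidalLinear k C]

lemma GBraidedCat.twist_eq_leftClosure (𝒞 : GBraidedCat k G C) (X : C) {a : G}
    (hX : 𝒞.mem X a) : 𝒞.twist X a hX = leftClosure (coev' X) (ev X) (𝒞.τ X X a hX) :=
  rfl

lemma GBraidedCat.mμ_map_τ_mδ (𝒞 : GBraidedCat k G C) (b : G) (X Y : C) {a : G}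
    (hY : 𝒞.mem Y a) :
    mμ (𝒞.φ b) (𝒞.φM b) X Y ≫ (𝒞.φ b).map (𝒞.τ X Y a hY)
        ≫ mδ (𝒞.φ b) (𝒞.φM b) Y ((𝒞.φ a).obj X)
      = 𝒞.τ ((𝒞.φ b).obj X) ((𝒞.φ b).obj Y) (b⁻¹ * a * b) (𝒞.φ_mem b hY)
        ≫ ((𝒞.φ b).obj Y ◁ ((𝒞.φ₂ (b⁻¹ * a * b) b X).hom
            ≫ φObjCast 𝒞.φ (show b * (b⁻¹ * a * b) = a * b by group) X
            ≫ (𝒞.φ₂ b a X).inv)) := by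
  rw [← Category.assoc, ← 𝒞.braiding₃ b X Y a hY]
  simp only [mμ, mδ, Category.assoc, Functor.Monoidal.μ_δ, Category.comp_id]

theorem statement12 (𝒞 : GBraidedCat k G C) (hpiv : 𝒞.toGCrossedCat.PivotalCrossing)
    (X : C) (a b : G) (hX : 𝒞.mem X a) :
    (𝒞.φ b).map (𝒞.twist X a hX)
      = 𝒞.twist ((𝒞.φ b).obj X) (b⁻¹ * a * b) (𝒞.φ_mem b hX)
        ≫ (𝒞.φ₂ (b⁻¹ * a * b) b X).hom
        ≫ φObjCast 𝒞.φ (show b * (b⁻¹ * a * b) = a * b by group) X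
        ≫ (𝒞.φ₂ b a X).inv := by
  let := 𝒞.φM b
  rw [𝒞.twist_eq_leftClosure, 𝒞.twist_eq_leftClosure, map_leftClosure_coev'_ev _ (hpiv b X),
    ← leftClosure_comp_whiskerLeft, ← 𝒞.mμ_map_τ_mδ]
  rfl

end Statement

end SurgeryHQFT
end

section
/- In a pre-fusion category, the left and right dimensions of any simple object are invertible elements of the ground ring k. -/
set_option linter.unusedSectionVars false

open CategoryTheory MonoidalCategory CategoryTheory.Limits

universe w x v u v₂ u₂ v₃ u₃

namespace SurgeryHQFT

open Pivotal

/-!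
Duality identifies `Hom(𝟙, X ⊗ X*)` and `Hom(X ⊗ X*, 𝟙)` with `End X`, so for simple `X` they are
free of rank one, spanned by `coev X` and `ev' X`, and `dimr X = coev X ≫ ev' X`. Over a nonzero
ring `coev X ≠ 0`, and a nonzero morphism `𝟙 ⟶ A` into a semisimple object forces `𝟙` to be a
summand of `A`: there are `v = e • coev X` and `w = f • ev' X` with `v ≫ w = 𝟙`, whence
`e * f * dimr X = 1`. The left dimension is handled in the same way with the pairing `(X*, X)`.
-/

namespace SimpleObj

variable {k : Type w} [CommRing k] {C : Type u} [Category.{v} C] [Preadditive C] [Linear k C]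
  {X : C}

theorem smul_id_injective (hX : SimpleObj k X) : Function.Injective (fun c : k => c • 𝟙 X) :=
  fun c _ h => (hX (c • 𝟙 X)).unique rfl h

theorem id_ne_zero [Nontrivial k] (hX : SimpleObj k X) : 𝟙 X ≠ 0 := fun h =>
  one_ne_zero (hX.smul_id_injective (by simp [h]) : (1 : k) = 0)

theorem exists_eq_smul_of_equiv (hX : SimpleObj k X) {A B : C} (E : (X ⟶ X) ≃ (A ⟶ B))
    (hE : ∀ (c : k) (f : X ⟶ X), E (c • f) = c • E f) {t : A ⟶ B} (ht : E (𝟙 X) = t)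
    (g : A ⟶ B) : ∃ c : k, g = c • t := by
  obtain ⟨c, hc, -⟩ := hX (E.symm g)
  exact ⟨c, by rw [← ht, ← hE, ← hc, E.apply_symm_apply]⟩

end SimpleObj

namespace ExactPairing

variable {k : Type w} [CommRing k] {C : Type u} [Category.{v} C] [MonoidalCategory C]
  [Preadditive C] [CategoryTheory.Linear k C] [MonoidalPreadditive C] {X Y : C} [ExactPairing X Y]

theorem coevaluation_ne_zero_of_simpleObj_left [Nontrivial k] (hX : SimpleObj k X) :
    η_ X Y ≠ 0 := fun h => hX.id_ne_zero <| by
  simpa [h] using (λ_ X).inv ≫= (CategoryTheory.ExactPairing.evaluation_coevaluation X Y).symm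
    =≫ (ρ_ X).hom

theorem coevaluation_ne_zero_of_simpleObj_right [Nontrivial k] (hY : SimpleObj k Y) :
    η_ X Y ≠ 0 := fun h => hY.id_ne_zero <| by
  simpa [h] using (ρ_ Y).inv ≫= (CategoryTheory.ExactPairing.coevaluation_evaluation X Y).symm
    =≫ (λ_ Y).hom

variable [MonoidalLinear k C]

theorem exists_eq_smul_coevaluation_of_simpleObj_left (hX : SimpleObj k X)
    (g : 𝟙_ C ⟶ X ⊗ Y) : ∃ c : k, g = c • η_ X Y :=
  hX.exists_eq_smul_of_equiv
    (((λ_ X).symm.homCongr (Iso.refl X)).trans (tensorRightHomEquiv _ X Y X))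
    (fun _ _ => by simp [tensorRightHomEquiv])
    (by simpa [← Equiv.eq_symm_apply] using
      (tensorRightHomEquiv_symm_coevaluation_comp_whiskerRight (𝟙 X)).symm) g

theorem exists_eq_smul_coevaluation_of_simpleObj_right (hY : SimpleObj k Y)
    (g : 𝟙_ C ⟶ X ⊗ Y) : ∃ c : k, g = c • η_ X Y :=
  hY.exists_eq_smul_of_equiv
    (((ρ_ Y).symm.homCongr (Iso.refl Y)).trans (tensorLeftHomEquiv _ X Y Y))
    (fun _ _ => by simp [tensorLeftHomEquiv])
    (by simpa [← Equiv.eq_symm_apply] using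
      (tensorLeftHomEquiv_symm_coevaluation_comp_whiskerLeft (𝟙 Y)).symm) g

theorem exists_eq_smul_evaluation_of_simpleObj_left (hX : SimpleObj k X)
    (w : Y ⊗ X ⟶ 𝟙_ C) : ∃ c : k, w = c • ε_ X Y :=
  hX.exists_eq_smul_of_equiv
    (((Iso.refl X).homCongr (ρ_ X).symm).trans (tensorLeftHomEquiv X X Y _).symm)
    (fun _ _ => by simp [tensorLeftHomEquiv])
    (by rw [Equiv.trans_apply, Equiv.symm_apply_eq]; simp [tensorLeftHomEquiv]) w

theorem exists_eq_smul_evaluation_of_simpleObj_right (hY : SimpleObj k Y)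
    (w : Y ⊗ X ⟶ 𝟙_ C) : ∃ c : k, w = c • ε_ X Y :=
  hY.exists_eq_smul_of_equiv
    (((Iso.refl Y).homCongr (λ_ Y).symm).trans (tensorRightHomEquiv Y X Y _).symm)
    (fun _ _ => by simp [tensorRightHomEquiv])
    (by rw [Equiv.trans_apply, Equiv.symm_apply_eq]; simp [tensorRightHomEquiv]) w

end ExactPairing

namespace Pivotal

variable {C : Type u} [Category.{v} C] [MonoidalCategory C] [Pivotal C]

instance exactPairing (X : C) : ExactPairing X (dual X) where
  coevaluation' := coev X
  evaluation' := ev X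
  coevaluation_evaluation' := by
    rw [← cancel_epi (ρ_ (dual X)).inv, ← cancel_mono (λ_ (dual X)).hom]
    simpa using zig₂ X
  evaluation_coevaluation' := by
    rw [← cancel_epi (λ_ X).inv, ← cancel_mono (ρ_ X).hom]
    simpa using zig₁ X

instance exactPairingDual (X : C) : ExactPairing (dual X) X where
  coevaluation' := coev' X
  evaluation' := ev' X
  coevaluation_evaluation' := by
    rw [← cancel_epi (ρ_ X).inv, ← cancel_mono (λ_ X).hom]
    simpa using zig₃ X
  evaluation_coevaluation' := by
    rw [← cancel_epi (λ_ (dual X)).inv, ← cancel_mono (ρ_ (dual X)).hom]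
    simpa using zig₄ X

end Pivotal

namespace PreFusion

variable {k : Type w} [CommRing k] {C : Type u} [Category.{v} C] [MonoidalCategory C]
  [Preadditive C] [CategoryTheory.Linear k C] [HasFiniteBiproducts C]

theorem exists_comp_eq_id_of_ne_zero (hC : PreFusion k C) {A : C} {g : 𝟙_ C ⟶ A}
    (hg : g ≠ 0) : ∃ (v : 𝟙_ C ⟶ A) (w : A ⟶ 𝟙_ C), v ≫ w = 𝟙 (𝟙_ C) := by
  obtain ⟨n, s, hs, ⟨h⟩⟩ := hC.semisimple A
  by_contra! hretract
  apply hg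
  suffices g ≫ h.hom = 0 by simpa using this =≫ h.inv
  refine biproduct.hom_ext _ _ fun i => ?_
  rw [zero_comp]
  refine hC.hom_vanish hC.unit_simple (hs i) ⟨fun ψ => ?_⟩ _
  exact hretract (ψ.hom ≫ biproduct.ι s i ≫ h.inv) (h.hom ≫ biproduct.π s i ≫ ψ.inv) (by simp)

theorem isUnit_of_comp_eq_smul (hC : PreFusion k C) {A : C} {cv : 𝟙_ C ⟶ A} {ew : A ⟶ 𝟙_ C}
    (hcv : ∀ g : 𝟙_ C ⟶ A, ∃ c : k, g = c • cv) (hew : ∀ w : A ⟶ 𝟙_ C, ∃ c : k, w = c • ew)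
    (hne : cv ≠ 0) {d : k} (hd : cv ≫ ew = d • 𝟙 (𝟙_ C)) : IsUnit d := by
  obtain ⟨v, w, hvw⟩ := hC.exists_comp_eq_id_of_ne_zero hne
  obtain ⟨e, rfl⟩ := hcv v
  obtain ⟨f, rfl⟩ := hew w
  have hefd : f * (e * d) = 1 :=
    hC.unit_simple.smul_id_injective (by simpa [hd, smul_smul] using hvw)
  exact .of_mul_eq_one_right (f * e) (by linear_combination hefd)

end PreFusion

section Statement

variable {k : Type w} [CommRing k]
variable {C : Type u} [Category.{v} C] [MonoidalCategory C] [Pivotal C]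
  [Preadditive C] [CategoryTheory.Linear k C] [MonoidalPreadditive C] [MonoidalLinear k C]
  [HasFiniteBiproducts C]

theorem statement16 (hC : PreFusion k C) (X : C) (hX : SimpleObj k X) :
    (∃ c : k, IsUnit c ∧ diml X = c • 𝟙 (𝟙_ C)) ∧
    (∃ c : k, IsUnit c ∧ dimr X = c • 𝟙 (𝟙_ C)) := by
  obtain ⟨l, hl, -⟩ := hC.unit_simple (diml X)
  obtain ⟨r, hr, -⟩ := hC.unit_simple (dimr X)
  rcases subsingleton_or_nontrivial k with _ | _
  · exact ⟨⟨l, isUnit_of_subsingleton l, hl⟩, ⟨r, isUnit_of_subsingleton r, hr⟩⟩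
  refine ⟨⟨l, ?_, hl⟩, ⟨r, ?_, hr⟩⟩
  · refine hC.isUnit_of_comp_eq_smul (cv := coev' X) (ew := ev X)
      (ExactPairing.exists_eq_smul_coevaluation_of_simpleObj_right hX)
      (ExactPairing.exists_eq_smul_evaluation_of_simpleObj_left hX)
      (ExactPairing.coevaluation_ne_zero_of_simpleObj_right (X := dual X) hX) ?_
    simpa [diml, trl] using hl
  · refine hC.isUnit_of_comp_eq_smul (cv := coev X) (ew := ev' X)
      (ExactPairing.exists_eq_smul_coevaluation_of_simpleObj_left hX)
      (ExactPairing.exists_eq_smul_evaluation_of_simpleObj_right hX)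
      (ExactPairing.coevaluation_ne_zero_of_simpleObj_left (Y := dual X) hX) ?_
    simpa [dimr, trr] using hr

end Statement

end SurgeryHQFT
end
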